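/- arXiv:math-ph/0111023 — 2 statements merged into one kernel-verified Lean document; each statement's English description precedes it below -/
import Mathlib

section
/- Let n = 2m be even and let ω be a skew-symmetric n×n matrix over ℂ. In the Grassmann algebra Λ_n(ℂ) with generators η_1,…,η_n, one has (1/m!)·( (1/2)·Σ_{i,j=1}^n ω_{ij} η_i η_j )^m = Pf(ω) · η_1 η_2 ⋯ η_n, where Pf(ω) is the combinatorial Pfaffian of ω. Equivalently, the Berezin integral of exp((1/2) η^t ω η) equals Pf(ω). -/
open scoped BigOperators
open Matrix

/-- The combinatorial Pfaffian of an `n × n` matrix (intended for even `n = 2k`):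
`Pf(A) = (1/(2^k k!)) Σ_{σ ∈ S_{2k}} sgn(σ) Π_{l=1}^{k} A_{σ(2l-1), σ(2l)}`.
The (ordered) product is taken as a list product so that the definition also makes
sense with entries in a possibly noncommutative `ℂ`-algebra. -/
noncomputable def pfaffian {A : Type*} [Ring A] [Algebra ℂ A] {n : ℕ}
    (M : Matrix (Fin n) (Fin n) A) : A :=
  ((2 ^ (n / 2) * (Nat.factorial (n / 2)) : ℂ))⁻¹ •
    ∑ σ : Equiv.Perm (Fin n),
      ((Equiv.Perm.sign σ : ℤ) : ℂ) •
        ((List.finRange (n / 2)).map fun l =>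
          M (σ ⟨2 * l.val, by have := l.isLt; omega⟩)
            (σ ⟨2 * l.val + 1, by have := l.isLt; omega⟩)).prod

/-- The generators `η i = ι(e i)` of the Grassmann algebra `Λ_n(ℂ)`. -/
noncomputable def grassmannGen (n : ℕ) (i : Fin n) : ExteriorAlgebra ℂ (Fin n → ℂ) :=
  ExteriorAlgebra.ι ℂ (Pi.single i (1 : ℂ))

lemma pair_prod_aux {M : Type*} [Monoid M] (f : ℕ → M) (m : ℕ) :
    ((List.range m).map (fun l => f (2*l) * f (2*l+1))).prod
      = ((List.range (2*m)).map f).prod := by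
  induction m with
  | zero => simp
  | succ m ih =>
    rw [List.range_succ, show 2*(m+1) = (2*m+1)+1 by ring, List.range_succ,
      List.range_succ]
    simp [ih, mul_assoc]

lemma sum_pow_aux {R ι : Type*} [Semiring R] [Fintype ι] (a : ι → R) :
    ∀ m : ℕ, (∑ p, a p) ^ m
      = ∑ F : Fin m → ι, ((List.finRange m).map (a ∘ F)).prod
  | 0 => by simp
  | (m+1) => by
    have key : ∀ q : ι × (Fin m → ι),
        ((List.finRange (m+1)).map (a ∘ Fin.consEquiv (fun _ => ι) q)).prod
          = a q.1 * ((List.finRange m).map (a ∘ q.2)).prod := by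
      intro q
      rw [List.finRange_succ, List.map_cons, List.prod_cons, List.map_map]
      have h1 : (a ∘ Fin.consEquiv (fun _ => ι) q) ∘ Fin.succ = a ∘ q.2 := by
        funext i; simp [Fin.consEquiv]
      have h2 : (a ∘ Fin.consEquiv (fun _ => ι) q) 0 = a q.1 := by
        simp [Fin.consEquiv]
      rw [h1, h2]
    rw [pow_succ', sum_pow_aux a m, Finset.sum_mul_sum, ← Finset.sum_product',
      Finset.univ_product_univ]
    refine Fintype.sum_equiv (Fin.consEquiv (fun _ => ι)) _ _ fun q => ?_
    rw [key q]

lemma smul_list_prod_aux {A ι : Type*} [Ring A] [Algebra ℂ A]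
    (c : ι → ℂ) (x : ι → A) : ∀ L : List ι,
    (L.map (fun i => c i • x i)).prod = (L.map c).prod • (L.map x).prod
  | [] => by simp
  | (h :: t) => by
    simp only [List.map_cons, List.prod_cons, smul_list_prod_aux c x t,
      smul_mul_assoc, mul_smul_comm, smul_smul]
    rw [mul_comm ((t.map c).prod) (c h)]

lemma sum_fun_eq_sum_perm_aux {N : ℕ} {β : Type*} [AddCommMonoid β]
    (t : (Fin N → Fin N) → β) (h0 : ∀ g, ¬ Function.Injective g → t g = 0) :
    ∑ g : Fin N → Fin N, t g = ∑ σ : Equiv.Perm (Fin N), t ⇑σ := by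
  classical
  have himage : ∀ g ∈ Finset.univ,
      g ∉ (Finset.univ.image fun σ : Equiv.Perm (Fin N) => ⇑σ) → t g = 0 := by
    intro g _ hg
    refine h0 g fun hinj => hg ?_
    have hb : Function.Bijective g := Finite.injective_iff_bijective.mp hinj
    exact Finset.mem_image.mpr ⟨Equiv.ofBijective g hb, Finset.mem_univ _, rfl⟩
  rw [← Finset.sum_subset (Finset.subset_univ _) himage,
    Finset.sum_image (fun σ _ τ _ h => Equiv.ext (congrFun h))]

lemma range_map_eq_finRange_map {M : Type*} {m : ℕ} (G : Fin m → M) (f : ℕ → M)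
    (h : ∀ l : Fin m, f l.val = G l) :
    (List.range m).map f = (List.finRange m).map G := by
  apply List.ext_getElem (by simp)
  intro i h1 h2
  simpa using (h ⟨i, by simpa using h1⟩)


/-- **Pfaffian via the Grassmann algebra.**  For `n = 2m` and a skew-symmetric
`n × n` complex matrix `ω`, in `Λ_n(ℂ)` one has
`(1/m!) ((1/2) Σ_{i,j} ω_{ij} η_i η_j)^m = Pf(ω) · η_1 ⋯ η_n`. -/
theorem pfaffian_grassmann (m n : ℕ) (hn : n = 2 * m)
    (ω : Matrix (Fin n) (Fin n) ℂ) (hskew : ωᵀ = -ω) :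
    ((Nat.factorial m : ℂ))⁻¹ •
        (((1 : ℂ) / 2) •
            ∑ i : Fin n, ∑ j : Fin n,
              ω i j • (grassmannGen n i * grassmannGen n j)) ^ m
      = pfaffian ω • ((List.finRange n).map (grassmannGen n)).prod := by
  subst hn
  classical
  set η : Fin (2*m) → ExteriorAlgebra ℂ (Fin (2*m) → ℂ) := grassmannGen (2*m) with hη
  set v : Fin (2*m) → (Fin (2*m) → ℂ) := fun i => Pi.single i 1 with hv
  have hv_inj : Function.Injective v := by
    intro i j hij
    by_contra hne
    have h1 := congrFun hij i
    rw [hv] at h1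
    simp only [Pi.single_eq_same, Pi.single_eq_of_ne hne] at h1
    exact one_ne_zero h1
  set E := ExteriorAlgebra.ιMulti ℂ (2*m) v with hE
  have htop : ((List.finRange (2*m)).map η).prod = E := by
    rw [← List.ofFn_eq_map]
    exact (ExteriorAlgebra.ιMulti_apply v).symm
  -- the pairing map and its equivalence
  let pair : (Fin m → Fin (2*m) × Fin (2*m)) → (Fin (2*m) → Fin (2*m)) := fun F k =>
    if h2 : k.val % 2 = 0 then (F ⟨k.val / 2, by have := k.isLt; omega⟩).1
    else (F ⟨k.val / 2, by have := k.isLt; omega⟩).2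
  have pair_even : ∀ F (l : Fin m) (k : Fin (2*m)), k.val = 2*l.val →
      pair F k = (F l).1 := by
    intro F l k hk
    have h0 : k.val % 2 = 0 := by omega
    simp only [pair]
    rw [dif_pos h0]
    suffices hlk : (⟨k.val / 2, by have := k.isLt; omega⟩ : Fin m) = l by rw [hlk]
    apply Fin.ext
    show k.val / 2 = l.val
    omega
  have pair_odd : ∀ F (l : Fin m) (k : Fin (2*m)), k.val = 2*l.val + 1 →
      pair F k = (F l).2 := by
    intro F l k hk
    have h0 : ¬ (k.val % 2 = 0) := by omega
    simp only [pair]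
    rw [dif_neg h0]
    suffices hlk : (⟨k.val / 2, by have := k.isLt; omega⟩ : Fin m) = l by rw [hlk]
    apply Fin.ext
    show k.val / 2 = l.val
    omega
  let e : (Fin m → Fin (2*m) × Fin (2*m)) ≃ (Fin (2*m) → Fin (2*m)) :=
    { toFun := pair
      invFun := fun g l => (g ⟨2*l.val, by have := l.isLt; omega⟩,
                            g ⟨2*l.val+1, by have := l.isLt; omega⟩)
      left_inv := by
        intro F; funext l
        exact Prod.ext (pair_even F l _ rfl) (pair_odd F l _ rfl)
      right_inv := by
        intro g; funext k
        simp only [pair]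
        split_ifs with h
        · congr 1; apply Fin.ext; show 2*(k.val/2) = k.val; omega
        · congr 1; apply Fin.ext; show 2*(k.val/2)+1 = k.val; omega }
  set a : Fin (2*m) × Fin (2*m) → ExteriorAlgebra ℂ (Fin (2*m) → ℂ) :=
    fun p => ω p.1 p.2 • (η p.1 * η p.2) with ha
  have hsum : ∑ i : Fin (2*m), ∑ j : Fin (2*m), ω i j • (η i * η j) = ∑ p, a p :=
    (Fintype.sum_prod_type a).symm
  -- per-F identity
  have hprodF : ∀ F : Fin m → Fin (2*m) × Fin (2*m),
      ((List.finRange m).map (a ∘ F)).prod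
        = (((List.finRange m).map fun l => ω (F l).1 (F l).2).prod : ℂ)
            • ExteriorAlgebra.ιMulti ℂ (2*m) (v ∘ pair F) := by
    intro F
    have h1 : ((List.finRange m).map (a ∘ F)).prod
        = (((List.finRange m).map fun l => ω (F l).1 (F l).2).prod : ℂ)
            • ((List.finRange m).map fun l => η (F l).1 * η (F l).2).prod := by
      have := smul_list_prod_aux (fun l : Fin m => ω (F l).1 (F l).2)
        (fun l : Fin m => η (F l).1 * η (F l).2) (List.finRange m)
      exact this
    rw [h1]
    congr 1
    let f : ℕ → ExteriorAlgebra ℂ (Fin (2*m) → ℂ) :=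
      fun k => if h : k < 2*m then η (pair F ⟨k, h⟩) else 1
    have hL : (List.finRange m).map (fun l => η (F l).1 * η (F l).2)
        = (List.range m).map (fun l => f (2*l) * f (2*l+1)) := by
      refine (range_map_eq_finRange_map _ _ ?_).symm
      intro l
      have e1 : f (2*l.val) = η (F l).1 := by
        simp only [f]
        rw [dif_pos (by have := l.isLt; omega : 2*l.val < 2*m)]
        rw [pair_even F l _ rfl]
      have e2 : f (2*l.val+1) = η (F l).2 := by
        simp only [f]
        rw [dif_pos (by have := l.isLt; omega : 2*l.val+1 < 2*m)]
        rw [pair_odd F l _ rfl]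
      rw [e1, e2]
    rw [hL, pair_prod_aux f m, ExteriorAlgebra.ιMulti_apply, List.ofFn_eq_map]
    refine congrArg List.prod ?_
    refine range_map_eq_finRange_map _ f ?_
    intro k
    simp only [f]
    rw [dif_pos k.isLt]
    rfl
  -- reindex by the equivalence
  have hstep : ∑ F : Fin m → Fin (2*m) × Fin (2*m), ((List.finRange m).map (a ∘ F)).prod
      = ∑ g : Fin (2*m) → Fin (2*m),
          (((List.finRange m).map fun l => ω (e.symm g l).1 (e.symm g l).2).prod : ℂ)
            • ExteriorAlgebra.ιMulti ℂ (2*m) (v ∘ g) := by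
    refine Fintype.sum_equiv e _ _ fun F => ?_
    rw [hprodF F, Equiv.symm_apply_apply]
    rfl
  have hvan : ∀ g : Fin (2*m) → Fin (2*m), ¬ Function.Injective g →
      (((List.finRange m).map fun l => ω (e.symm g l).1 (e.symm g l).2).prod : ℂ)
        • ExteriorAlgebra.ιMulti ℂ (2*m) (v ∘ g) = 0 := by
    intro g hg
    have hni : ¬ Function.Injective (v ∘ g) := fun h => hg (Function.Injective.of_comp h)
    rw [AlternatingMap.map_eq_zero_of_not_injective _ _ hni, smul_zero]
  have hsign : ∀ σ : Equiv.Perm (Fin (2*m)),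
      ExteriorAlgebra.ιMulti ℂ (2*m) (v ∘ ⇑σ) = ((Equiv.Perm.sign σ : ℤ) : ℂ) • E := by
    intro σ
    rw [AlternatingMap.map_perm, Units.smul_def, ← Int.cast_smul_eq_zsmul ℂ, hE]
  -- put the left side together
  rw [hsum, smul_pow, sum_pow_aux a m, hstep,
    sum_fun_eq_sum_perm_aux _ hvan]
  have hterm : ∀ σ : Equiv.Perm (Fin (2*m)),
      (((List.finRange m).map fun l => ω (e.symm ⇑σ l).1 (e.symm ⇑σ l).2).prod : ℂ)
        • ExteriorAlgebra.ιMulti ℂ (2*m) (v ∘ ⇑σ)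
      = ((((List.finRange m).map fun l => ω (e.symm ⇑σ l).1 (e.symm ⇑σ l).2).prod : ℂ)
          * ((Equiv.Perm.sign σ : ℤ) : ℂ)) • E := by
    intro σ
    rw [hsign σ, smul_smul]
  rw [Finset.sum_congr rfl fun σ _ => hterm σ, ← Finset.sum_smul, smul_smul, smul_smul]
  -- right side
  rw [htop, pfaffian, smul_assoc, smul_smul]
  have h2m : (2*m)/2 = m := by omega
  -- identify the matrix-entry products
  have hC : ∀ σ : Equiv.Perm (Fin (2*m)),
      (((List.finRange ((2*m)/2)).map fun l =>
          ω (σ ⟨2 * l.val, by have := l.isLt; omega⟩)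
            (σ ⟨2 * l.val + 1, by have := l.isLt; omega⟩)).prod : ℂ)
      = (((List.finRange m).map fun l => ω (e.symm ⇑σ l).1 (e.symm ⇑σ l).2).prod : ℂ) := by
    intro σ
    let f : ℕ → ℂ := fun l =>
      if h : 2*l+1 < 2*m then ω (σ ⟨2*l, by omega⟩) (σ ⟨2*l+1, h⟩) else 1
    rw [← List.ofFn_eq_map, List.prod_ofFn, ← List.ofFn_eq_map, List.prod_ofFn]
    calc (∏ l : Fin ((2*m)/2), ω (σ ⟨2 * l.val, by have := l.isLt; omega⟩)
            (σ ⟨2 * l.val + 1, by have := l.isLt; omega⟩))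
        = ∏ l : Fin ((2*m)/2), f l.val := by
          refine Finset.prod_congr rfl fun l _ => ?_
          have hl : 2*l.val+1 < 2*m := by have := l.isLt; omega
          simp only [f]
          rw [dif_pos hl]
      _ = ∏ l ∈ Finset.range ((2*m)/2), f l := Fin.prod_univ_eq_prod_range f _
      _ = ∏ l ∈ Finset.range m, f l := by rw [h2m]
      _ = ∏ l : Fin m, f l.val := (Fin.prod_univ_eq_prod_range f m).symm
      _ = ∏ l : Fin m, ω (e.symm ⇑σ l).1 (e.symm ⇑σ l).2 := by
          refine Finset.prod_congr rfl fun l _ => ?_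
          have hl : 2*l.val+1 < 2*m := by have := l.isLt; omega
          simp only [f]
          rw [dif_pos hl]
          rfl
  have hRS : (∑ σ : Equiv.Perm (Fin (2*m)),
      ((Equiv.Perm.sign σ : ℤ) : ℂ) •
        (((List.finRange ((2*m)/2)).map fun l =>
          ω (σ ⟨2 * l.val, by have := l.isLt; omega⟩)
            (σ ⟨2 * l.val + 1, by have := l.isLt; omega⟩)).prod : ℂ))
      = ∑ σ : Equiv.Perm (Fin (2*m)), ((Equiv.Perm.sign σ : ℤ) : ℂ) *
          (((List.finRange m).map fun l => ω (e.symm ⇑σ l).1 (e.symm ⇑σ l).2).prod : ℂ) :=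
    Finset.sum_congr rfl fun σ _ => by rw [smul_eq_mul, hC σ]
  rw [hRS, h2m]
  congr 1
  have hfac : ((Nat.factorial m : ℂ)) ≠ 0 := Nat.cast_ne_zero.mpr (Nat.factorial_ne_zero m)
  have h2 : ((2 : ℂ))^m ≠ 0 := pow_ne_zero m two_ne_zero
  rw [Finset.mul_sum, Finset.mul_sum]
  refine Finset.sum_congr rfl fun σ _ => ?_
  field_simp
  rw [one_div, inv_pow, mul_comm, ← mul_assoc, mul_inv_cancel₀ h2, one_mul]
end

section
/- Let n = 2m be even and let ω be a skew-symmetric n×n matrix over ℂ. In the Grassmann algebra Λ_n(ℂ) with generators η_1,…,η_n one has exp((1/2) Σ_{i,j=1}^n ω_{ij} η_i η_j) = Σ_I Pf(ω_I) η^I, where the sum runs over all subsets I of {1,…,n} of even cardinality, ω_I is the submatrix of ω with rows and columns indexed by I, and Pf is the combinatorial Pfaffian. -/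
open scoped BigOperators
open Matrix

/-- For a subset `I = {i₁ < … < i_k} ⊆ {1,…,n}`, the monomial `η^I = η_{i₁} ⋯ η_{i_k}`. -/
noncomputable def grassmannMonomial (n : ℕ) (I : Finset (Fin n)) :
    ExteriorAlgebra ℂ (Fin n → ℂ) :=
  ((I.sort (· ≤ ·)).map (grassmannGen n)).prod

/-- The submatrix `ω_I` of `ω` with rows and columns indexed by `I` (in increasing order). -/
def Matrix.subByFinset {A : Type*} {n : ℕ} (ω : Matrix (Fin n) (Fin n) A)
    (I : Finset (Fin n)) : Matrix (Fin I.card) (Fin I.card) A :=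
  fun a b => ω (I.orderIsoOfFin rfl a) (I.orderIsoOfFin rfl b)

/-! ### Helper lemmas -/

lemma sum_pow_ofFn {R : Type*} [Semiring R] {ι : Type*} [Fintype ι] (f : ι → R) :
    ∀ k : ℕ, (∑ i : ι, f i) ^ k = ∑ g : Fin k → ι, (List.ofFn fun l => f (g l)).prod
  | 0 => by simp
  | (k+1) => by
    rw [pow_succ', sum_pow_ofFn f k, Finset.sum_mul_sum, ← Finset.sum_product',
      Finset.univ_product_univ]
    exact Fintype.sum_equiv (Fin.consEquiv (fun _ => ι)) _ _
      (fun p => by simp [List.ofFn_succ])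

lemma ofFn_prod_smul {A : Type*} [Ring A] [Algebra ℂ A] :
    ∀ (k : ℕ) (c : Fin k → ℂ) (a : Fin k → A),
    (List.ofFn fun l => c l • a l).prod = (∏ l, c l) • (List.ofFn a).prod
  | 0, _, _ => by simp
  | (k+1), c, a => by
    rw [List.ofFn_succ, List.ofFn_succ, List.prod_cons, List.prod_cons,
      ofFn_prod_smul k, Fin.prod_univ_succ, smul_mul_smul_comm]

lemma prod_range_pair {M : Type*} [Monoid M] (a : ℕ → M) :
    ∀ k : ℕ, ((List.range k).map fun l => a (2*l) * a (2*l+1)).prod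
      = ((List.range (2*k)).map a).prod
  | 0 => by simp
  | (k+1) => by
    rw [List.range_succ, show 2*(k+1) = (2*k+1)+1 by ring, List.range_succ, List.range_succ]
    simp only [List.map_append, List.prod_append, prod_range_pair a k]
    simp [mul_assoc]

lemma ofFn_eq_range_map {M : Type*} (n : ℕ) (f : Fin n → M) (g : ℕ → M)
    (h : ∀ i : Fin n, g i.val = f i) : List.ofFn f = (List.range n).map g := by
  apply List.ext_getElem <;> simp +contextual [← h]

lemma prod_ofFn_pair {M : Type*} [Monoid M] [Inhabited M] (k : ℕ) (a : Fin (2*k) → M) :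
    (List.ofFn fun l : Fin k => a ⟨2*l.val, by omega⟩ * a ⟨2*l.val+1, by omega⟩).prod
      = (List.ofFn a).prod := by
  have ha : List.ofFn a = (List.range (2*k)).map
      (fun t => if h : t < 2*k then a ⟨t, h⟩ else default) := by
    apply ofFn_eq_range_map; intro i; simp [i.isLt]
  have hb : (List.ofFn fun l : Fin k => a ⟨2*l.val, by omega⟩ * a ⟨2*l.val+1, by omega⟩)
      = (List.range k).map (fun l =>
          (fun t => if h : t < 2*k then a ⟨t, h⟩ else default) (2*l) *
          (fun t => if h : t < 2*k then a ⟨t, h⟩ else default) (2*l+1)) := by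
    apply ofFn_eq_range_map; intro i
    have h1 : 2*i.val < 2*k := by omega
    have h2 : 2*i.val+1 < 2*k := by omega
    simp [h1, h2]
  rw [ha, hb]
  exact prod_range_pair (fun t => if h : t < 2*k then a ⟨t, h⟩ else default) k

lemma ιMulti_cast {n c d : ℕ} (h : c = d) (v : Fin c → (Fin n → ℂ)) :
    ExteriorAlgebra.ιMulti ℂ d (fun t => v (Fin.cast h.symm t))
      = ExteriorAlgebra.ιMulti ℂ c v := by subst h; rfl

lemma image_orderEmbOfFin {n k : ℕ} (I : Finset (Fin n)) (h : I.card = k) :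
    Finset.image (fun a => I.orderEmbOfFin h a) Finset.univ = I := by
  ext x
  simp only [Finset.mem_image, Finset.mem_univ, true_and]
  constructor
  · rintro ⟨a, rfl⟩; exact Finset.orderEmbOfFin_mem I h a
  · intro hx
    refine ⟨(I.orderIsoOfFin h).symm ⟨x, hx⟩, ?_⟩
    rw [← Finset.coe_orderIsoOfFin_apply]
    simp

lemma grassmannMonomial_eq_iMulti (n : ℕ) (I : Finset (Fin n)) :
    grassmannMonomial n I = ExteriorAlgebra.ιMulti ℂ I.card
      (fun a => Pi.single (I.orderEmbOfFin rfl a) (1:ℂ)) := by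
  rw [ExteriorAlgebra.ιMulti_apply]
  unfold grassmannMonomial
  have hs : I.sort (· ≤ ·) = List.ofFn (fun a : Fin I.card => I.orderEmbOfFin rfl a) := by
    apply List.ext_getElem
    · simp
    · intro i h1 h2
      simp [Finset.orderEmbOfFin_apply]
  rw [hs, List.map_ofFn]
  rfl

lemma pfaffian_eq (k : ℕ) {c : ℕ} (hc : c = 2*k) (M : Matrix (Fin c) (Fin c) ℂ) :
    pfaffian M = ((2^k * (Nat.factorial k) : ℂ))⁻¹ •
      ∑ σ : Equiv.Perm (Fin c), ((Equiv.Perm.sign σ : ℤ) : ℂ) •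
        ∏ l : Fin k, M (σ ⟨2*l.val, by omega⟩) (σ ⟨2*l.val+1, by omega⟩) := by
  subst hc
  unfold pfaffian
  have h2 : 2*k/2 = k := by omega
  congr 1
  · rw [h2]
  · refine Finset.sum_congr rfl fun σ _ => ?_
    congr 1
    rw [← List.ofFn_eq_map, List.prod_ofFn]
    exact Fintype.prod_equiv (finCongr h2) _ _ (fun l => rfl)


lemma sign_smul_complex {M : Type*} [AddCommGroup M] [Module ℂ M] {c : ℕ}
    (σ : Equiv.Perm (Fin c)) (x : M) :
    Equiv.Perm.sign σ • x = ((Equiv.Perm.sign σ : ℤ) : ℂ) • x := by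
  rw [Units.smul_def, Int.cast_smul_eq_zsmul]

lemma inner_sum_eq (n k : ℕ) (ω : Matrix (Fin n) (Fin n) ℂ) (I : Finset (Fin n))
    (hI : I.card = 2*k) :
    ∑ h ∈ Finset.univ.filter (fun h : Fin (2*k) → Fin n =>
        Function.Injective h ∧ Finset.image h Finset.univ = I),
      (∏ l : Fin k, ω (h ⟨2*l.val, by have := l.isLt; omega⟩)
          (h ⟨2*l.val+1, by have := l.isLt; omega⟩)) •
        ExteriorAlgebra.ιMulti ℂ (2*k) (fun t => (Pi.single (h t) 1 : Fin n → ℂ))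
    = (2^k * (Nat.factorial k : ℂ)) •
        (pfaffian (ω.subByFinset I) • grassmannMonomial n I) := by
  classical
  have hC : (2^k * (Nat.factorial k : ℂ)) ≠ 0 :=
    mul_ne_zero (pow_ne_zero _ two_ne_zero)
      (Nat.cast_ne_zero.mpr (Nat.factorial_ne_zero k))
  rw [pfaffian_eq k hI (ω.subByFinset I), smul_assoc, smul_smul,
    mul_inv_cancel₀ hC, one_smul]
  rw [Finset.sum_smul]
  set emb : Fin I.card → Fin n := fun a => I.orderEmbOfFin rfl a with hembdef
  have hembinj : Function.Injective emb := (I.orderEmbOfFin rfl).injective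
  have hmem : ∀ a, emb a ∈ I := fun a => Finset.orderEmbOfFin_mem I rfl a
  -- the map from permutations to functions
  set Φ : Equiv.Perm (Fin I.card) → (Fin (2*k) → Fin n) :=
    fun σ => fun t => emb (σ (Fin.cast hI.symm t)) with hΦdef
  have hΦmem : ∀ σ : Equiv.Perm (Fin I.card),
      Function.Injective (Φ σ) ∧ Finset.image (Φ σ) Finset.univ = I := by
    intro σ
    constructor
    · intro a b hab
      have := hembinj hab
      have h2 := σ.injective this
      have hv : (Fin.cast hI.symm a).val = (Fin.cast hI.symm b).val := congrArg Fin.val h2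
      exact Fin.ext hv
    · have : Finset.image (Φ σ) Finset.univ
          = Finset.image emb (Finset.image (fun t => σ (Fin.cast hI.symm t)) Finset.univ) := by
        rw [Finset.image_image]; rfl
      rw [this]
      have hsurj : Finset.image (fun t : Fin (2*k) => σ (Fin.cast hI.symm t)) Finset.univ
          = Finset.univ := by
        apply Finset.image_univ_of_surjective
        intro a
        exact ⟨Fin.cast hI (σ.symm a), by simp⟩
      rw [hsurj]
      exact image_orderEmbOfFin I rfl
  -- inverse map
  set Ψ : (Fin (2*k) → Fin n) → Equiv.Perm (Fin I.card) := fun h =>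
    if hh : Function.Injective h ∧ Finset.image h Finset.univ = I then
      Equiv.ofBijective
        (fun a => (I.orderIsoOfFin rfl).symm
          ⟨h (Fin.cast hI a), by
            have hm : h (Fin.cast hI a) ∈ Finset.image h Finset.univ :=
              Finset.mem_image_of_mem _ (Finset.mem_univ _)
            rwa [hh.2] at hm⟩)
        (Finite.injective_iff_bijective.mp (by
          intro a b hab
          have h1 := (I.orderIsoOfFin rfl).symm.injective hab
          have h2 : h (Fin.cast hI a) = h (Fin.cast hI b) := congrArg Subtype.val h1
          have h3 := hh.1 h2
          have hv : (Fin.cast hI a).val = (Fin.cast hI b).val := congrArg Fin.val h3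
          exact Fin.ext hv))
    else 1 with hΨdef
  symm
  refine Finset.sum_bij' (fun σ _ => Φ σ) (fun h hh => Ψ h)
    (fun σ _ => Finset.mem_filter.mpr ⟨Finset.mem_univ _, hΦmem σ⟩)
    (fun h _ => Finset.mem_univ _) ?_ ?_ ?_
  · -- left inverse : Ψ (Φ σ) = σ
    intro σ _
    have key : ∀ a, (Ψ (Φ σ)) a = σ a := by
      intro a
      rw [hΨdef]
      simp only [dif_pos (hΦmem σ)]
      apply (I.orderIsoOfFin (rfl : I.card = I.card)).injective
      rw [Equiv.ofBijective_apply, OrderIso.apply_symm_apply]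
      apply Subtype.ext
      show Φ σ (Fin.cast hI a) = ((I.orderIsoOfFin rfl) (σ a) : Fin n)
      rw [Finset.coe_orderIsoOfFin_apply]
      show emb (σ (Fin.cast hI.symm (Fin.cast hI a))) = emb (σ a)
      exact congrArg emb (congrArg σ (Fin.ext rfl))
    exact Equiv.ext key
  · -- right inverse : Φ (Ψ h) = h
    intro h hh
    rw [Finset.mem_filter] at hh
    funext t
    rw [hΨdef, hΦdef]
    simp only [dif_pos hh.2]
    show emb ((Equiv.ofBijective _ _) (Fin.cast hI.symm t)) = h t
    rw [Equiv.ofBijective_apply]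
    show ((I.orderIsoOfFin rfl) ((I.orderIsoOfFin rfl).symm _) : Fin n) = h t
    rw [OrderIso.apply_symm_apply]
    exact congrArg h (Fin.ext rfl)
  · -- summand equality
    intro σ _
    -- LHS summand of σ-sum equals the h-summand at Φ σ
    have hcoeff : (∏ l : Fin k, (ω.subByFinset I) (σ ⟨2*l.val, by omega⟩)
          (σ ⟨2*l.val+1, by omega⟩))
        = ∏ l : Fin k, ω ((Φ σ) ⟨2*l.val, by have := l.isLt; omega⟩)
            ((Φ σ) ⟨2*l.val+1, by have := l.isLt; omega⟩) := by
      refine Finset.prod_congr rfl fun l _ => ?_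
      rw [hΦdef]
      show ω ((I.orderIsoOfFin rfl) _ : Fin n) _ = _
      rw [Finset.coe_orderIsoOfFin_apply, Finset.coe_orderIsoOfFin_apply]
      show ω (emb (σ _)) (emb (σ _)) = ω (emb (σ _)) (emb (σ _))
      rfl
    have hmulti : ExteriorAlgebra.ιMulti ℂ (2*k) (fun t => (Pi.single ((Φ σ) t) 1 : Fin n → ℂ))
        = ((Equiv.Perm.sign σ : ℤ) : ℂ) • grassmannMonomial n I := by
      have e3 : ExteriorAlgebra.ιMulti ℂ (2*k) (fun t => (Pi.single ((Φ σ) t) 1 : Fin n → ℂ))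
          = ExteriorAlgebra.ιMulti ℂ I.card
              ((fun a : Fin I.card => (Pi.single (emb a) 1 : Fin n → ℂ)) ∘ σ) :=
        ιMulti_cast hI ((fun a : Fin I.card => (Pi.single (emb a) 1 : Fin n → ℂ)) ∘ σ)
      rw [e3, AlternatingMap.map_perm, sign_smul_complex]
      congr 1
      rw [grassmannMonomial_eq_iMulti]
    show (((Equiv.Perm.sign σ : ℤ) : ℂ) •
        ∏ l : Fin k, (ω.subByFinset I) (σ ⟨2*l.val, by omega⟩) (σ ⟨2*l.val+1, by omega⟩)) •
          grassmannMonomial n I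
      = (∏ l : Fin k, ω ((Φ σ) ⟨2*l.val, by have := l.isLt; omega⟩)
          ((Φ σ) ⟨2*l.val+1, by have := l.isLt; omega⟩)) •
        ExteriorAlgebra.ιMulti ℂ (2*k) (fun t => (Pi.single ((Φ σ) t) 1 : Fin n → ℂ))
    rw [← hcoeff, hmulti, smul_smul, smul_eq_mul, mul_comm]

def unfoldPair {α : Type*} (k : ℕ) (g : Fin k → α × α) : Fin (2*k) → α :=
  fun t => if _ : t.val % 2 = 0 then (g ⟨t.val/2, by have := t.isLt; omega⟩).1
    else (g ⟨t.val/2, by have := t.isLt; omega⟩).2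

lemma unfoldPair_even {α : Type*} (k : ℕ) (g : Fin k → α × α) (l : Fin k)
    (h1 : 2*l.val < 2*k) : unfoldPair k g ⟨2*l.val, h1⟩ = (g l).1 := by
  have he : (⟨((⟨2*l.val, h1⟩ : Fin (2*k)) : ℕ)/2,
      by have := (⟨2*l.val, h1⟩ : Fin (2*k)).isLt; omega⟩ : Fin k) = l := by
    apply Fin.ext
    show (2*l.val)/2 = l.val
    omega
  simp only [unfoldPair]
  rw [dif_pos (show ((⟨2*l.val, h1⟩ : Fin (2*k)) : ℕ) % 2 = 0 by show (2*l.val) % 2 = 0; omega),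
    he]

lemma unfoldPair_odd {α : Type*} (k : ℕ) (g : Fin k → α × α) (l : Fin k)
    (h1 : 2*l.val+1 < 2*k) : unfoldPair k g ⟨2*l.val+1, h1⟩ = (g l).2 := by
  have he : (⟨((⟨2*l.val+1, h1⟩ : Fin (2*k)) : ℕ)/2,
      by have := (⟨2*l.val+1, h1⟩ : Fin (2*k)).isLt; omega⟩ : Fin k) = l := by
    apply Fin.ext
    show (2*l.val+1)/2 = l.val
    omega
  simp only [unfoldPair]
  rw [dif_neg (show ¬(((⟨2*l.val+1, h1⟩ : Fin (2*k)) : ℕ) % 2 = 0) by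
      show ¬((2*l.val+1) % 2 = 0); omega), he]

lemma pair_to_double (n k : ℕ) (ω : Matrix (Fin n) (Fin n) ℂ) :
    ∑ g : Fin k → Fin n × Fin n,
      (∏ l : Fin k, ω (g l).1 (g l).2) •
        (List.ofFn fun l => grassmannGen n (g l).1 * grassmannGen n (g l).2).prod
    = ∑ h : Fin (2*k) → Fin n,
      (∏ l : Fin k, ω (h ⟨2*l.val, by have := l.isLt; omega⟩)
          (h ⟨2*l.val+1, by have := l.isLt; omega⟩)) •
        ExteriorAlgebra.ιMulti ℂ (2*k) (fun t => (Pi.single (h t) 1 : Fin n → ℂ)) := by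
  classical
  refine Finset.sum_bij' (fun g _ => unfoldPair k g)
    (fun h _ => fun l : Fin k =>
      (h ⟨2*l.val, by have := l.isLt; omega⟩, h ⟨2*l.val+1, by have := l.isLt; omega⟩))
    (fun g _ => Finset.mem_univ _) (fun h _ => Finset.mem_univ _) ?_ ?_ ?_
  · -- left inverse
    intro g _
    funext l
    have h1 : 2*l.val < 2*k := by have := l.isLt; omega
    have h2 : 2*l.val+1 < 2*k := by have := l.isLt; omega
    exact Prod.ext (unfoldPair_even k g l h1) (unfoldPair_odd k g l h2)
  · -- right inverse
    intro h _
    funext t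
    simp only [unfoldPair]
    by_cases ht : t.val % 2 = 0
    · rw [dif_pos ht]
      exact congrArg h (Fin.ext (show 2*(t.val/2) = t.val by omega))
    · rw [dif_neg ht]
      exact congrArg h (Fin.ext (show 2*(t.val/2)+1 = t.val by omega))
  · -- summands
    intro g _
    letI : Inhabited (ExteriorAlgebra ℂ (Fin n → ℂ)) := ⟨1⟩
    have hcoeff : (∏ l : Fin k, ω (g l).1 (g l).2)
        = ∏ l : Fin k, ω (unfoldPair k g ⟨2*l.val, by have := l.isLt; omega⟩)
            (unfoldPair k g ⟨2*l.val+1, by have := l.isLt; omega⟩) := by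
      refine Finset.prod_congr rfl fun l _ => ?_
      rw [unfoldPair_even, unfoldPair_odd]
    have hprod : (List.ofFn fun l : Fin k =>
          grassmannGen n (g l).1 * grassmannGen n (g l).2).prod
        = ExteriorAlgebra.ιMulti ℂ (2*k)
            (fun t => (Pi.single (unfoldPair k g t) 1 : Fin n → ℂ)) := by
      rw [ExteriorAlgebra.ιMulti_apply]
      show _ = (List.ofFn fun t => grassmannGen n (unfoldPair k g t)).prod
      rw [← prod_ofFn_pair k (fun t => grassmannGen n (unfoldPair k g t))]
      have key : ∀ l : Fin k, grassmannGen n (g l).1 * grassmannGen n (g l).2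
          = grassmannGen n (unfoldPair k g ⟨2*l.val, by have := l.isLt; omega⟩) *
            grassmannGen n (unfoldPair k g ⟨2*l.val+1, by have := l.isLt; omega⟩) := by
        intro l
        rw [unfoldPair_even, unfoldPair_odd]
      exact congrArg List.prod (congrArg List.ofFn (funext key))
    rw [hcoeff, hprod]


/-- **Gaussian expansion into Pfaffians.** For `n = 2m` and a skew-symmetric complex
`n × n` matrix `ω`, in `Λ_n(ℂ)` one has
`exp((1/2) Σ_{i,j} ω_{ij} η_i η_j) = Σ_{I even} Pf(ω_I) η^I`,
the exponential being the finite sum `Σ_{k=0}^{m} (1/k!) ((1/2) Σ ω_{ij} η_i η_j)^k`. -/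
theorem exp_eq_sum_pfaffian (m n : ℕ) (hn : n = 2 * m)
    (ω : Matrix (Fin n) (Fin n) ℂ) (hskew : ωᵀ = -ω) :
    ∑ k ∈ Finset.range (m + 1),
        ((Nat.factorial k : ℂ))⁻¹ •
          (((1 : ℂ) / 2) •
              ∑ i : Fin n, ∑ j : Fin n,
                ω i j • (grassmannGen n i * grassmannGen n j)) ^ k
      = ∑ I ∈ Finset.univ.filter (fun I : Finset (Fin n) => Even I.card),
          pfaffian (ω.subByFinset I) • grassmannMonomial n I := by
  classical
  have hmaps : ∀ I ∈ Finset.univ.filter (fun I : Finset (Fin n) => Even I.card),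
      I.card / 2 ∈ Finset.range (m+1) := by
    intro I _
    have h1 : I.card ≤ n := by
      have h2 := Finset.card_le_univ I
      simpa using h2
    simp only [Finset.mem_range]
    omega
  conv_rhs => rw [← Finset.sum_fiberwise_of_maps_to hmaps
      (fun I => pfaffian (ω.subByFinset I) • grassmannMonomial n I)]
  refine Finset.sum_congr rfl fun k hk => ?_
  have hfib : ((Finset.univ.filter (fun I : Finset (Fin n) => Even I.card)).filter
      (fun I => I.card / 2 = k))
      = Finset.univ.filter (fun I : Finset (Fin n) => I.card = 2*k) := by
    rw [Finset.filter_filter]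
    ext I
    simp only [Finset.mem_filter, Finset.mem_univ, true_and, Nat.even_iff]
    omega
  rw [hfib]
  -- expand the LHS
  rw [show (∑ i : Fin n, ∑ j : Fin n, ω i j • (grassmannGen n i * grassmannGen n j))
      = ∑ p : Fin n × Fin n, ω p.1 p.2 • (grassmannGen n p.1 * grassmannGen n p.2) by
    rw [← Finset.univ_product_univ, Finset.sum_product]]
  rw [smul_pow, sum_pow_ofFn]
  rw [show (∑ g : Fin k → Fin n × Fin n, (List.ofFn fun l =>
        ω (g l).1 (g l).2 • (grassmannGen n (g l).1 * grassmannGen n (g l).2)).prod)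
      = ∑ g : Fin k → Fin n × Fin n, (∏ l : Fin k, ω (g l).1 (g l).2) •
          (List.ofFn fun l => grassmannGen n (g l).1 * grassmannGen n (g l).2).prod from
    Finset.sum_congr rfl fun g _ => ofFn_prod_smul k _ _]
  rw [pair_to_double n k ω]
  rw [← Finset.sum_filter_add_sum_filter_not Finset.univ
      (fun h : Fin (2*k) → Fin n => Function.Injective h)]
  have hnoninj : (∑ h ∈ Finset.univ.filter
        (fun h : Fin (2*k) → Fin n => ¬ Function.Injective h),
      (∏ l : Fin k, ω (h ⟨2*l.val, by have := l.isLt; omega⟩)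
          (h ⟨2*l.val+1, by have := l.isLt; omega⟩)) •
        ExteriorAlgebra.ιMulti ℂ (2*k) (fun t => (Pi.single (h t) 1 : Fin n → ℂ))) = 0 := by
    refine Finset.sum_eq_zero fun h hh => ?_
    rw [Finset.mem_filter] at hh
    have hni : ¬ Function.Injective (fun t => (Pi.single (h t) 1 : Fin n → ℂ)) := by
      intro hcontra
      exact hh.2 (fun a b hab =>
        hcontra (congrArg (fun x => (Pi.single x 1 : Fin n → ℂ)) hab))
    rw [AlternatingMap.map_eq_zero_of_not_injective _ _ hni, smul_zero]
  rw [hnoninj, add_zero]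
  have hmaps2 : ∀ h ∈ Finset.univ.filter
      (fun h : Fin (2*k) → Fin n => Function.Injective h),
      Finset.image h Finset.univ
        ∈ Finset.univ.filter (fun I : Finset (Fin n) => I.card = 2*k) := by
    intro h hh
    rw [Finset.mem_filter] at hh
    rw [Finset.mem_filter]
    refine ⟨Finset.mem_univ _, ?_⟩
    rw [Finset.card_image_of_injective _ hh.2]
    simp
  rw [← Finset.sum_fiberwise_of_maps_to hmaps2]
  simp only [Finset.filter_filter]
  rw [Finset.sum_congr rfl (fun I hI => inner_sum_eq n k ω I
    (Finset.mem_filter.mp hI).2)]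
  rw [Finset.smul_sum, Finset.smul_sum]
  refine Finset.sum_congr rfl fun I hI => ?_
  have hA : ((Nat.factorial k : ℂ))⁻¹ * ((1:ℂ)/2)^k * (2^k * (Nat.factorial k : ℂ)) = 1 := by
    have h1 : (Nat.factorial k : ℂ) ≠ 0 := Nat.cast_ne_zero.mpr (Nat.factorial_ne_zero k)
    have h2 : ((2:ℂ))^k ≠ 0 := pow_ne_zero _ two_ne_zero
    field_simp
    rw [← mul_pow]; norm_num
  rw [smul_smul, smul_smul, hA, one_smul]
end
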